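/- (Positive semidefiniteness of a bordered symmetric circulant matrix.) Let T ≥ 1, let m : Fin T → ℝ satisfy m_t = m_{(T−t) mod T} for all t, and let m_T, m_{T+1} ∈ ℝ. Let M be the symmetric (T+1)×(T+1) block matrix [[circ(m), m_T·1],[m_T·1ᵀ, m_{T+1}]], where 1 is the all-ones column vector of length T. Then M is positive semidefinite if and only if all of the following hold: (i) m_{T+1} ≥ 0; (ii) ∑_{t=0}^{T−1} m_t ≥ 0; (iii) m_{T+1} · ∑_{t=0}^{T−1} m_t ≥ T·m_T²; and (iv) ∑_{t=0}^{T−1} m_t · cos(2π j t / T) ≥ 0 for every j = 1, …, T−1. -/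

import Mathlib

/-!
Write `Q x = ∑ s t, m (s - t) x s x t` for the quadratic form of `circ m`, `S = ∑ t, m t` and
`λ j = ∑ t, m t cos (2π j t / T)`. At `(x, c)` the bordered matrix has quadratic form
`Q x + 2 mT c ∑ x + mT1 c²`. The characters `χ j t = exp (2π i j t / T)` diagonalise `circ m`:
orthogonality gives `T Q x = ∑ j, λ j |x̂ j|²`, and `Q (Re χ j) + Q (Im χ j) = T λ j`. So `λ j ≥ 0`
is necessary, and conversely it gives `T Q x ≥ S (∑ x)²`, the `j = 0` term. Constant vectors `x`,
respectively this bound, leave a binary quadratic form in `(∑ x, c)`, whose nonnegativity is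
conditions (i)–(iii).
-/

open Finset Matrix

lemma forall_quadratic_nonneg_iff {a b d : ℝ} :
    (∀ x y : ℝ, 0 ≤ a * x ^ 2 + 2 * b * x * y + d * y ^ 2) ↔ 0 ≤ a ∧ 0 ≤ d ∧ b ^ 2 ≤ a * d := by
  constructor
  · intro h
    refine ⟨by simpa using h 1 0, by simpa using h 0 1, ?_⟩
    have := discrim_le_zero fun x => (by simpa [sq, mul_assoc] using h x 1 :
      0 ≤ a * (x * x) + 2 * b * x + d)
    rw [discrim] at this
    linarith
  · rintro ⟨ha, hd, hb⟩ x y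
    rcases ha.eq_or_lt with rfl | ha
    · obtain rfl : b = 0 := by nlinarith
      simpa using mul_nonneg hd (sq_nonneg y)
    · have hsq : a * (a * x ^ 2 + 2 * b * x * y + d * y ^ 2) =
          (a * x + b * y) ^ 2 + (a * d - b ^ 2) * y ^ 2 := by ring
      refine nonneg_of_mul_nonneg_right (hsq ▸ ?_) ha
      nlinarith [sq_nonneg (a * x + b * y), sq_nonneg y]

lemma dotProduct_of_const_mulVec {ι κ : Type*} [Fintype ι] [Fintype κ] (e : ℝ) (u : ι → ℝ)
    (v : κ → ℝ) : u ⬝ᵥ (of fun _ _ => e) *ᵥ v = e * (∑ i, u i) * ∑ j, v j := by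
  simp only [dotProduct, mulVec, of_apply, ← mul_sum, ← sum_mul]
  ring

section Bordered

variable {n : Type*} [Fintype n]

lemma dotProduct_fromBlocks_const_mulVec (A : Matrix n n ℝ) (b d : ℝ) (x : n → ℝ) (c : ℝ) :
    Sum.elim x (fun _ => c) ⬝ᵥ fromBlocks A (of fun (_ : n) (_ : Unit) => b)
      (of fun (_ : Unit) (_ : n) => b) (of fun (_ : Unit) (_ : Unit) => d) *ᵥ
        Sum.elim x (fun _ => c) =
      x ⬝ᵥ A *ᵥ x + 2 * b * c * ∑ i, x i + d * c ^ 2 := by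
  simp only [fromBlocks_mulVec, sumElim_dotProduct_sumElim, Sum.elim_comp_inl, Sum.elim_comp_inr,
    dotProduct_add, dotProduct_of_const_mulVec, sum_const, card_univ, Fintype.card_unit, one_smul]
  ring

lemma posSemidef_fromBlocks_const_iff (A : Matrix n n ℝ) (b d : ℝ) :
    (fromBlocks A (of fun (_ : n) (_ : Unit) => b) (of fun (_ : Unit) (_ : n) => b)
      (of fun (_ : Unit) (_ : Unit) => d)).PosSemidef ↔
      A.IsHermitian ∧
        ∀ (x : n → ℝ) (c : ℝ), 0 ≤ x ⬝ᵥ A *ᵥ x + 2 * b * c * ∑ i, x i + d * c ^ 2 := by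
  have hB : (of fun (_ : n) (_ : Unit) => b)ᴴ = of fun (_ : Unit) (_ : n) => b := by ext; simp
  have hC : (of fun (_ : Unit) (_ : n) => b)ᴴ = of fun (_ : n) (_ : Unit) => b := by ext; simp
  have hD : (of fun (_ : Unit) (_ : Unit) => d).IsHermitian := by ext; simp
  rw [posSemidef_iff_dotProduct_mulVec, isHermitian_fromBlocks_iff]
  simp only [hB, hC, hD, star_trivial, and_true]
  refine and_congr_right fun _ => ⟨fun h x c => ?_, fun h y => ?_⟩
  · simpa [dotProduct_fromBlocks_const_mulVec] using h (Sum.elim x fun _ => c)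
  · have hy : y = Sum.elim (y ∘ Sum.inl) (fun _ => y (Sum.inr ())) := by ext (_ | _) <;> rfl
    rw [hy, dotProduct_fromBlocks_const_mulVec]
    exact h _ _

end Bordered

section Circulant

variable {G : Type*} [AddCommGroup G] [Fintype G] (m : G → ℝ)

lemma sum_comp_sub_left {M : Type*} [AddCommMonoid M] (f : G → M) (s : G) :
    ∑ t, f (s - t) = ∑ t, f t :=
  Fintype.sum_equiv (Equiv.subLeft s) _ _ fun _ => rfl

lemma dotProduct_circulant_mulVec (x : G → ℝ) :
    x ⬝ᵥ circulant m *ᵥ x = ∑ s, ∑ t, m (s - t) * (x s * x t) := by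
  simp only [dotProduct, mulVec, circulant_apply, mul_sum]
  exact sum_congr rfl fun _ _ => sum_congr rfl fun _ _ => by ring

lemma const_dotProduct_circulant_mulVec_const (a : ℝ) :
    (fun _ => a) ⬝ᵥ circulant m *ᵥ (fun _ => a) = Fintype.card G * (∑ t, m t) * a ^ 2 := by
  simp only [dotProduct_circulant_mulVec, ← sum_mul, sum_comp_sub_left m, sum_const, card_univ,
    nsmul_eq_mul]
  ring

lemma re_dotProduct_circulant_mulVec_add_im (χ : AddChar G ℂ) :
    (fun t => (χ t).re) ⬝ᵥ circulant m *ᵥ (fun t => (χ t).re) +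
      (fun t => (χ t).im) ⬝ᵥ circulant m *ᵥ (fun t => (χ t).im) =
      Fintype.card G * ∑ k, m k * (χ k).re := by
  have hsub (s t : G) : (χ s).re * (χ t).re + (χ s).im * (χ t).im = (χ (s - t)).re := by
    rw [sub_eq_add_neg, AddChar.map_add_eq_mul, AddChar.map_neg_eq_conj]
    simp only [Complex.mul_re, Complex.conj_re, Complex.conj_im]
    ring
  simp only [dotProduct_circulant_mulVec, ← sum_add_distrib, ← mul_add, hsub,
    sum_comp_sub_left (fun k => m k * (χ k).re), sum_const, card_univ, nsmul_eq_mul]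

lemma sum_mul_re_nonneg_of_posSemidef_circulant (hm : (circulant m).PosSemidef)
    (χ : AddChar G ℂ) : 0 ≤ ∑ k, m k * (χ k).re := by
  have hform := add_nonneg (hm.dotProduct_mulVec_nonneg fun t => (χ t).re)
    (hm.dotProduct_mulVec_nonneg fun t => (χ t).im)
  simp only [star_trivial, re_dotProduct_circulant_mulVec_add_im] at hform
  exact nonneg_of_mul_nonneg_right hform (by exact_mod_cast Fintype.card_pos)

end Circulant

section Fourier

variable {R : Type*} [CommRing R] [Fintype R] {ψ : AddChar R ℂ} (m : R → ℝ)

lemma card_mul_dotProduct_circulant_mulVec (hψ : ψ.IsPrimitive) (x : R → ℝ) :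
    Fintype.card R * (x ⬝ᵥ circulant m *ᵥ x) =
      ∑ j, (∑ k, m k * (ψ (j * k)).re) * Complex.normSq (∑ t, x t * ψ (j * t)) := by
  classical
  have hnormSq (j : R) :
      (Complex.normSq (∑ t, x t * ψ (j * t)) : ℂ) = ∑ s, ∑ t, x s * x t * ψ (j * (t - s)) := by
    rw [Complex.normSq_eq_conj_mul_self, map_sum, sum_mul]
    refine sum_congr rfl fun s _ => ?_
    rw [mul_sum]
    refine sum_congr rfl fun t _ => ?_
    rw [map_mul (starRingEnd ℂ), Complex.conj_ofReal, ← AddChar.map_neg_eq_conj, mul_sub,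
      sub_eq_add_neg, add_comm, AddChar.map_add_eq_mul]
    ring
  have horth (g : R) : ∑ j, ∑ k, (m k : ℂ) * ψ (j * (k + g)) = Fintype.card R * m (-g) := by
    rw [sum_comm]
    simp only [← mul_sum, AddChar.sum_mulShift _ hψ, Nat.cast_ite, Nat.cast_zero, mul_ite,
      mul_zero, add_eq_zero_iff_eq_neg, sum_ite_eq', mem_univ, if_true]
    ring
  have hshift (j s t : R) : (∑ k, (m k : ℂ) * ψ (j * k)) * (x s * x t * ψ (j * (t - s))) =
      x s * x t * ∑ k, m k * ψ (j * (k + (t - s))) := by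
    rw [sum_mul, mul_sum]
    refine sum_congr rfl fun k _ => ?_
    rw [mul_add, AddChar.map_add_eq_mul]
    ring
  have hcomplex : (Fintype.card R : ℂ) * (∑ s, ∑ t, m (s - t) * (x s * x t) : ℝ) =
      ∑ j, (∑ k, m k * ψ (j * k)) * Complex.normSq (∑ t, x t * ψ (j * t)) := by
    calc (Fintype.card R : ℂ) * (∑ s, ∑ t, m (s - t) * (x s * x t) : ℝ)
        = ∑ s, ∑ t, ∑ j, (x s * x t : ℂ) * ∑ k, m k * ψ (j * (k + (t - s))) := by
          push_cast
          rw [mul_sum]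
          refine sum_congr rfl fun s _ => ?_
          rw [mul_sum]
          refine sum_congr rfl fun t _ => ?_
          rw [← mul_sum, horth, neg_sub]
          ring
      _ = ∑ s, ∑ j, ∑ t, (x s * x t : ℂ) * ∑ k, m k * ψ (j * (k + (t - s))) :=
          sum_congr rfl fun _ _ => sum_comm
      _ = ∑ j, ∑ s, ∑ t, (x s * x t : ℂ) * ∑ k, m k * ψ (j * (k + (t - s))) := sum_comm
      _ = ∑ j, (∑ k, m k * ψ (j * k)) * Complex.normSq (∑ t, x t * ψ (j * t)) := by
          simp only [hnormSq, mul_sum, hshift]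
  rw [dotProduct_circulant_mulVec]
  simpa only [← Complex.ofReal_natCast, ← Complex.ofReal_mul, Complex.ofReal_re, Complex.re_sum,
    Complex.re_mul_ofReal, Complex.re_ofReal_mul] using congrArg Complex.re hcomplex

lemma sum_mul_sq_sum_le_card_mul_dotProduct_circulant_mulVec (hψ : ψ.IsPrimitive)
    (hm : ∀ j ≠ 0, 0 ≤ ∑ k, m k * (ψ (j * k)).re) (x : R → ℝ) :
    (∑ t, m t) * (∑ t, x t) ^ 2 ≤ Fintype.card R * (x ⬝ᵥ circulant m *ᵥ x) := by
  classical
  rw [card_mul_dotProduct_circulant_mulVec m hψ]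
  conv_rhs => rw [Fintype.sum_eq_add_sum_compl 0]
  have hzero : (∑ k, m k * (ψ (0 * k)).re) * Complex.normSq (∑ t, x t * ψ (0 * t)) =
      (∑ t, m t) * (∑ t, x t) ^ 2 := by
    simp [sq, ← Complex.ofReal_sum]
  rw [hzero, le_add_iff_nonneg_right]
  exact sum_nonneg fun j hj => mul_nonneg (hm j (by simpa using hj)) (Complex.normSq_nonneg _)

end Fourier

lemma AddChar.IsPrimitive.compRingEquiv {R S R' : Type*} [CommRing R] [CommRing S]
    [CommMonoid R'] {ψ : AddChar S R'} (hψ : ψ.IsPrimitive) (e : R ≃+* S) :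
    (ψ.compAddMonoidHom e.toAddMonoidHom).IsPrimitive := by
  intro a ha h
  refine hψ (e.map_ne_zero_iff.2 ha) (AddChar.ext _ _ fun y => ?_)
  obtain ⟨x, rfl⟩ := e.surjective y
  simpa using DFunLike.congr_fun h x

lemma ZMod.finEquiv_apply (T : ℕ) [NeZero T] (j : Fin T) : ZMod.finEquiv T j = (j : ℕ) := by
  obtain ⟨n, rfl⟩ := Nat.exists_eq_succ_of_ne_zero (NeZero.ne T)
  exact (ZMod.natCast_zmod_val (n := n + 1) j).symm

open Fin.CommRing in
noncomputable def Fin.stdAddChar (T : ℕ) [NeZero T] : AddChar (Fin T) ℂ :=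
  ZMod.stdAddChar.compAddMonoidHom (ZMod.finEquiv T).toAddMonoidHom

open Fin.CommRing in
lemma Fin.isPrimitive_stdAddChar (T : ℕ) [NeZero T] : (Fin.stdAddChar T).IsPrimitive :=
  (ZMod.isPrimitive_stdAddChar T).compRingEquiv _

open Fin.CommRing in
lemma Fin.stdAddChar_mul_re (T : ℕ) [NeZero T] (j t : Fin T) :
    (Fin.stdAddChar T (j * t)).re = Real.cos (2 * Real.pi * (j : ℕ) * (t : ℕ) / T) := by
  have h : ZMod.finEquiv T (j * t) = (((j : ℕ) * (t : ℕ) : ℕ) : ℤ) := by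
    rw [map_mul, ZMod.finEquiv_apply, ZMod.finEquiv_apply]
    push_cast
    rfl
  change (ZMod.stdAddChar (ZMod.finEquiv T (j * t))).re = _
  rw [h, ZMod.stdAddChar_coe, ← Complex.exp_ofReal_mul_I_re]
  push_cast
  ring_nf

theorem bordered_circulant_posSemidef_iff (T : ℕ) (hT : 1 ≤ T) (m : Fin T → ℝ)
    (hm : ∀ t : Fin T, m t = m (-t)) (mT mT1 : ℝ) :
    (Matrix.fromBlocks
        (Matrix.of fun i j : Fin T => m (j - i))
        (Matrix.of fun (_ : Fin T) (_ : Unit) => mT)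
        (Matrix.of fun (_ : Unit) (_ : Fin T) => mT)
        (Matrix.of fun (_ : Unit) (_ : Unit) => mT1)).PosSemidef ↔
      (0 ≤ mT1 ∧ 0 ≤ ∑ t : Fin T, m t ∧
        (T : ℝ) * mT ^ 2 ≤ mT1 * ∑ t : Fin T, m t ∧
        ∀ j : Fin T, (j : ℕ) ≠ 0 →
          0 ≤ ∑ t : Fin T, m t * Real.cos (2 * Real.pi * (j : ℕ) * (t : ℕ) / T)) := by
  have : NeZero T := ⟨by omega⟩
  have hTpos : (0 : ℝ) < T := by exact_mod_cast hT
  let := Fin.instCommRing T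
  have hcirc : (of fun i j : Fin T => m (j - i)) = circulant m := by
    ext i j
    rw [of_apply, circulant_apply, hm, neg_sub]
  have hherm : (circulant m).IsHermitian :=
    isHermitian_iff_isSymm.2 (Fin.circulant_isSymm_iff.2 fun t => (hm t).symm)
  rw [hcirc]
  simp only [posSemidef_fromBlocks_const_iff, hherm, true_and, ne_eq,
    Fin.val_eq_zero_iff, ← Fin.stdAddChar_mul_re]
  constructor
  · intro h
    have hconst (a c : ℝ) :
        0 ≤ (T * ∑ t, m t) * a ^ 2 + 2 * (T * mT) * a * c + mT1 * c ^ 2 := by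
      have := h (fun _ => a) c
      simp only [const_dotProduct_circulant_mulVec_const, sum_const, card_univ, Fintype.card_fin,
        nsmul_eq_mul] at this
      linarith
    obtain ⟨hS, h1, hdisc⟩ := forall_quadratic_nonneg_iff.1 hconst
    have hpsd : (circulant m).PosSemidef :=
      posSemidef_iff_dotProduct_mulVec.2 ⟨hherm, fun x => by simpa using h x 0⟩
    refine ⟨h1, nonneg_of_mul_nonneg_right hS hTpos, by nlinarith, fun j _ => ?_⟩
    simpa using sum_mul_re_nonneg_of_posSemidef_circulant m hpsd ((Fin.stdAddChar T).mulShift j)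
  · rintro ⟨h1, hS, hdisc, hpos⟩ x c
    have hfourier := sum_mul_sq_sum_le_card_mul_dotProduct_circulant_mulVec m
      (Fin.isPrimitive_stdAddChar T) hpos x
    have hbinary := (forall_quadratic_nonneg_iff (b := T * mT)).2
      ⟨hS, mul_nonneg hTpos.le h1, by nlinarith [mul_le_mul_of_nonneg_left hdisc hTpos.le]⟩
      (∑ i, x i) c
    rw [Fintype.card_fin] at hfourier
    nlinarith
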